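/- arXiv:2601.11348 — 3 statements merged into one kernel-verified Lean document; each statement's English description precedes it below -/
import Mathlib

section
/- Let u(x,c) = ((c+Λ)/q)(1 − e^{θ₁(c)x}). If Λ + μ > 0 and Λ ≤ √(μ² + 2qσ²), then for every c with 0 ≤ c ≤ (μ² + 2qσ² − Λ²)/(2(Λ+μ)) one has ∂_c u(x,c) ≥ 0 for all x ≥ 0. If instead Λ + μ ≤ 0, then ∂_c u(x,c) ≥ 0 for all x ≥ 0 and all c ≥ 0. (Consequently, in these regimes the constant-rate value function solves the HJB equation and the optimal abatement threshold at such rates c is zero.) -/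
open Filter Set
open scoped Topology

noncomputable section

namespace CarbonAbatement

/-- Negative root of (σ²/2)z² + (μ−c)z − q = 0. -/
def θ1 (μ σ q c : ℝ) : ℝ := (c - μ - Real.sqrt ((c - μ) ^ 2 + 2 * q * σ ^ 2)) / σ ^ 2

/-- Positive root of (σ²/2)z² + (μ−c)z − q = 0. -/
def θ2 (μ σ q c : ℝ) : ℝ := (c - μ + Real.sqrt ((c - μ) ^ 2 + 2 * q * σ ^ 2)) / σ ^ 2

/-- The operator `L^c(f)(x) = (σ²/2) f''(x) + (μ−c) f'(x) − q f(x) + c + Λ`, with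
derivatives taken within the domain `[0,∞)`. -/
def Lop (μ σ q Λ c : ℝ) (f : ℝ → ℝ) (x : ℝ) : ℝ :=
  σ ^ 2 / 2 * derivWithin (fun y => derivWithin f (Ici 0) y) (Ici 0) x
    + (μ - c) * derivWithin f (Ici 0) x - q * f x + c + Λ

private lemma key (μ σ q Λ : ℝ) (hσ : 0 < σ) (hq : 0 < q) (hΛ : 0 < Λ) (c : ℝ) (hc : 0 ≤ c)
    (hcs : (c + Λ) ^ 2 ≤ (c - μ) ^ 2 + 2 * q * σ ^ 2) (x : ℝ) (hx : 0 ≤ x) :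
    0 ≤ deriv (fun d : ℝ => (d + Λ) / q * (1 - Real.exp (θ1 μ σ q d * x))) c := by
  set s : ℝ := Real.sqrt ((c - μ) ^ 2 + 2 * q * σ ^ 2) with hsdef
  have hσ2 : (0:ℝ) < σ ^ 2 := by positivity
  have hs0 : (0:ℝ) < (c - μ) ^ 2 + 2 * q * σ ^ 2 := by positivity
  have hs : 0 < s := Real.sqrt_pos.mpr hs0
  have hs2 : s ^ 2 = (c - μ) ^ 2 + 2 * q * σ ^ 2 := Real.sq_sqrt hs0.le
  have h1 : HasDerivAt (fun d : ℝ => (d - μ) ^ 2 + 2 * q * σ ^ 2) (2 * (c - μ)) c := by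
    have := (((hasDerivAt_id c).sub_const μ).pow 2).add_const (2 * q * σ ^ 2)
    refine this.congr_deriv ?_; simp
  have h2 : HasDerivAt (fun d : ℝ => Real.sqrt ((d - μ) ^ 2 + 2 * q * σ ^ 2)) ((c - μ) / s) c := by
    have := h1.sqrt hs0.ne'
    convert this using 1
    rw [← hsdef]; field_simp
  set t1 : ℝ := (1 - (c - μ) / s) / σ ^ 2 with ht1
  have h3 : HasDerivAt (fun d : ℝ => θ1 μ σ q d) t1 c := by
    unfold θ1
    have := (((hasDerivAt_id c).sub_const μ).sub h2).div_const (σ ^ 2)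
    exact this
  have hE : HasDerivAt (fun d : ℝ => Real.exp (θ1 μ σ q d * x))
      (Real.exp (θ1 μ σ q c * x) * (t1 * x)) c := (h3.mul_const x).exp
  set E : ℝ := Real.exp (θ1 μ σ q c * x) with hEdef
  have hD : HasDerivAt (fun d : ℝ => (d + Λ) / q * (1 - Real.exp (θ1 μ σ q d * x)))
      (1 / q * (1 - E) + (c + Λ) / q * (0 - E * (t1 * x))) c := by
    have hf : HasDerivAt (fun d : ℝ => (d + Λ) / q) (1 / q) c := by
      have := ((hasDerivAt_id c).add_const Λ).div_const q
      exact this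
    exact hf.mul ((hasDerivAt_const c (1:ℝ)).sub hE)
  rw [hD.deriv]
  -- algebraic facts
  set t : ℝ := θ1 μ σ q c with htdef
  have hts : t = (c - μ - s) / σ ^ 2 := rfl
  have htneg : t < 0 := by
    apply div_neg_of_neg_of_pos _ hσ2
    nlinarith [sq_nonneg (c - μ), Real.sq_sqrt hs0.le]
  have ht1s : t1 = -t / s := by
    rw [ht1, hts]; field_simp; ring_nf
  have hcΛ : 0 < c + Λ := by linarith
  have hcΛs : c + Λ ≤ s := by
    have := Real.sqrt_le_sqrt hcs
    rwa [Real.sqrt_sq hcΛ.le, ← hsdef] at this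
  set y : ℝ := -t * x with hy
  have hy0 : 0 ≤ y := mul_nonneg (by linarith) hx
  have hEy : E = Real.exp (-y) := by rw [hEdef, hy]; congr 1; ring
  have hexp : (1 + (c + Λ) / s * y) * Real.exp (-y) ≤ 1 := by
    have hA1 : (c + Λ) / s ≤ 1 := (div_le_one hs).mpr hcΛs
    have h1y : 1 + (c + Λ) / s * y ≤ Real.exp y := by
      have : (c + Λ) / s * y ≤ y := by
        nlinarith [div_nonneg hcΛ.le hs.le]
      nlinarith [Real.add_one_le_exp y]
    calc (1 + (c + Λ) / s * y) * Real.exp (-y) ≤ Real.exp y * Real.exp (-y) :=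
          mul_le_mul_of_nonneg_right h1y (Real.exp_pos _).le
      _ = 1 := by rw [← Real.exp_add]; simp
  have hfin : 0 ≤ 1 - E + (c + Λ) / s * (t * x) * E := by
    have : (c + Λ) / s * (t * x) = -((c + Λ) / s * y) := by rw [hy]; ring
    rw [this, hEy]
    nlinarith [hexp]
  have : 1 / q * (1 - E) + (c + Λ) / q * (0 - E * (t1 * x))
      = 1 / q * (1 - E + (c + Λ) / s * (t * x) * E) := by
    rw [ht1s]; field_simp; ring
  rw [this]
  positivity


/-- For `u(x,c) = ((c+Λ)/q)(1 − e^{θ₁(c)x})`: if `Λ + μ > 0` and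
`Λ ≤ √(μ² + 2qσ²)`, then `∂_c u(x,c) ≥ 0` for all `x ≥ 0` and all
`0 ≤ c ≤ (μ² + 2qσ² − Λ²)/(2(Λ+μ))`; if `Λ + μ ≤ 0`, then `∂_c u(x,c) ≥ 0` for all
`x ≥ 0` and all `c ≥ 0`. -/
theorem zero_threshold_regimes
    (μ σ q Λ : ℝ) (hσ : 0 < σ) (hq : 0 < q) (hΛ : 0 < Λ) :
    (0 < Λ + μ → Λ ≤ Real.sqrt (μ ^ 2 + 2 * q * σ ^ 2) →
      ∀ c : ℝ, 0 ≤ c → c ≤ (μ ^ 2 + 2 * q * σ ^ 2 - Λ ^ 2) / (2 * (Λ + μ)) →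
        ∀ x : ℝ, 0 ≤ x →
          0 ≤ deriv (fun d : ℝ => (d + Λ) / q * (1 - Real.exp (θ1 μ σ q d * x))) c) ∧
    (Λ + μ ≤ 0 →
      ∀ c : ℝ, 0 ≤ c → ∀ x : ℝ, 0 ≤ x →
        0 ≤ deriv (fun d : ℝ => (d + Λ) / q * (1 - Real.exp (θ1 μ σ q d * x))) c) := by
  constructor
  · intro hμ _ c hc hc2 x hx
    apply key μ σ q Λ hσ hq hΛ c hc _ x hx
    have h2 : c * (2 * (Λ + μ)) ≤ μ ^ 2 + 2 * q * σ ^ 2 - Λ ^ 2 :=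
      (le_div_iff₀ (by linarith)).mp hc2
    nlinarith
  · intro hμ c hc x hx
    apply key μ σ q Λ hσ hq hΛ c hc _ x hx
    nlinarith [mul_pos hq (pow_pos hσ 2), mul_nonneg hc (neg_nonneg.mpr hμ)]

end CarbonAbatement
end
end

section
/- Let u(x,c) = ((c+Λ)/q)(1 − e^{θ₁(c)x}). Then for every c ≥ 0 and x ≥ 0 the identity q ∂_c u(x,c) = 1 − e^{θ₁(c)x}(1 − θ₁(c)·((c+Λ)/√((c−μ)²+2qσ²))·x) holds, and the following are equivalent: (i) ∂_c u(x,c) ≥ 0 for all x ≥ 0; (ii) c + Λ ≤ √((c−μ)² + 2qσ²); (iii) 2c(Λ+μ) + Λ² ≤ 2qσ² + μ². -/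
open Filter Set
open scoped Topology

noncomputable section

namespace CarbonAbatement

lemma core_iff {a b : ℝ} (ha : 0 < a) (hb : 0 < b) :
    (∀ x : ℝ, 0 ≤ x → 1 + a * b * x ≤ Real.exp (a * x)) ↔ b ≤ 1 := by
  constructor
  · intro h
    by_contra hb1
    push_neg at hb1
    set x := (b - 1) / (a * b) with hx
    have hx0 : 0 < x := div_pos (by linarith) (by positivity)
    have haxpos : 0 < a * x := by positivity
    have hax : a * x = (b - 1) / b := by
      rw [hx]; field_simp
    have h1 : 1 - a * x = 1 / b := by
      rw [hax]; field_simp; ring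
    have h2 : 1 + a * b * x = b := by
      rw [hx]; field_simp; ring
    have h3 : 1 - a * x < Real.exp (-(a * x)) := by
      have := Real.add_one_lt_exp (x := -(a * x)) (by intro hc; nlinarith)
      linarith
    have h4 : Real.exp (a * x) * (1 - a * x) < 1 := by
      have := mul_lt_mul_of_pos_left h3 (Real.exp_pos (a * x))
      rwa [← Real.exp_add, add_neg_cancel, Real.exp_zero] at this
    have h5 : Real.exp (a * x) < b := by
      rw [h1] at h4
      calc Real.exp (a * x) = Real.exp (a * x) * (1 / b) * b := by field_simp
        _ < 1 * b := mul_lt_mul_of_pos_right h4 hb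
        _ = b := one_mul b
    have := h x hx0.le
    rw [h2] at this
    linarith
  · intro hb1 x hx
    have h0 : a * b * x ≤ a * x := by nlinarith [mul_nonneg (mul_nonneg ha.le hx) (sub_nonneg.mpr hb1)]
    calc 1 + a * b * x ≤ a * x + 1 := by linarith
      _ ≤ Real.exp (a * x) := Real.add_one_le_exp _

/-- For `u(x,c) = ((c+Λ)/q)(1 − e^{θ₁(c)x})` one has the identity
`q ∂_c u(x,c) = 1 − e^{θ₁(c)x}(1 − θ₁(c)((c+Λ)/√((c−μ)²+2qσ²)) x)` for all `c, x ≥ 0`,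
and the equivalences: `∂_c u(·,c) ≥ 0` on `[0,∞)` ⟺ `c + Λ ≤ √((c−μ)² + 2qσ²)` ⟺
`2c(Λ+μ) + Λ² ≤ 2qσ² + μ²`. -/
theorem partial_c_identity_and_equivalences
    (μ σ q Λ : ℝ) (hσ : 0 < σ) (hq : 0 < q) (hΛ : 0 < Λ) :
    (∀ c : ℝ, 0 ≤ c → ∀ x : ℝ, 0 ≤ x →
      q * deriv (fun d : ℝ => (d + Λ) / q * (1 - Real.exp (θ1 μ σ q d * x))) c =
        1 - Real.exp (θ1 μ σ q c * x) *
          (1 - θ1 μ σ q c *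
            ((c + Λ) / Real.sqrt ((c - μ) ^ 2 + 2 * q * σ ^ 2)) * x)) ∧
    (∀ c : ℝ, 0 ≤ c →
      ((∀ x : ℝ, 0 ≤ x →
          0 ≤ deriv (fun d : ℝ => (d + Λ) / q * (1 - Real.exp (θ1 μ σ q d * x))) c) ↔
        c + Λ ≤ Real.sqrt ((c - μ) ^ 2 + 2 * q * σ ^ 2)) ∧
      ((c + Λ ≤ Real.sqrt ((c - μ) ^ 2 + 2 * q * σ ^ 2)) ↔
        2 * c * (Λ + μ) + Λ ^ 2 ≤ 2 * q * σ ^ 2 + μ ^ 2)) := by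
  have hσ2 : (0:ℝ) < σ ^ 2 := by positivity
  -- the derivative identity, for all real c and x ≥ 0
  have key : ∀ c : ℝ, ∀ x : ℝ,
      q * deriv (fun d : ℝ => (d + Λ) / q * (1 - Real.exp (θ1 μ σ q d * x))) c =
        1 - Real.exp (θ1 μ σ q c * x) *
          (1 - θ1 μ σ q c *
            ((c + Λ) / Real.sqrt ((c - μ) ^ 2 + 2 * q * σ ^ 2)) * x) := by
    intro c x
    set A : ℝ := (c - μ) ^ 2 + 2 * q * σ ^ 2 with hA
    have hApos : 0 < A := by positivity
    set S : ℝ := Real.sqrt A with hSdef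
    have hSpos : 0 < S := Real.sqrt_pos.mpr hApos
    have hg : HasDerivAt (fun d : ℝ => (d - μ) ^ 2 + 2 * q * σ ^ 2) (2 * (c - μ)) c := by
      have h1 : HasDerivAt (fun d : ℝ => (d - μ) ^ 2) (2 * (c - μ)) c := by
        simpa using (((hasDerivAt_id c).sub_const μ).fun_pow 2)
      simpa using h1.add_const (2 * q * σ ^ 2)
    have hS : HasDerivAt (fun d : ℝ => Real.sqrt ((d - μ) ^ 2 + 2 * q * σ ^ 2))
        (2 * (c - μ) / (2 * S)) c := hg.sqrt hApos.ne'
    have hθ : HasDerivAt (fun d : ℝ => θ1 μ σ q d)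
        ((1 - 2 * (c - μ) / (2 * S)) / σ ^ 2) c := by
      have := (((hasDerivAt_id c).sub_const μ).sub hS).div_const (σ ^ 2)
      simpa [θ1] using this
    have hexp : HasDerivAt (fun d : ℝ => Real.exp (θ1 μ σ q d * x))
        (Real.exp (θ1 μ σ q c * x) * ((1 - 2 * (c - μ) / (2 * S)) / σ ^ 2 * x)) c :=
      (hθ.mul_const x).exp
    have hf : HasDerivAt (fun d : ℝ => (d + Λ) / q * (1 - Real.exp (θ1 μ σ q d * x)))
        (1 / q * (1 - Real.exp (θ1 μ σ q c * x)) +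
          (c + Λ) / q * (0 - Real.exp (θ1 μ σ q c * x) *
            ((1 - 2 * (c - μ) / (2 * S)) / σ ^ 2 * x))) c := by
      have h1 : HasDerivAt (fun d : ℝ => (d + Λ) / q) (1 / q) c := by
        simpa using (((hasDerivAt_id c).add_const Λ).div_const q)
      exact h1.mul ((hasDerivAt_const c (1:ℝ)).sub hexp)
    rw [hf.deriv]
    have hθval : θ1 μ σ q c = (c - μ - S) / σ ^ 2 := rfl
    rw [hθval]
    field_simp
    ring
  refine ⟨fun c _ x _ => key c x, fun c hc => ?_⟩
  set A : ℝ := (c - μ) ^ 2 + 2 * q * σ ^ 2 with hA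
  have hApos : 0 < A := by positivity
  set S : ℝ := Real.sqrt A with hSdef
  have hSpos : 0 < S := Real.sqrt_pos.mpr hApos
  have hS2 : S ^ 2 = A := Real.sq_sqrt hApos.le
  have hθneg : θ1 μ σ q c < 0 := by
    have : c - μ < S := by
      nlinarith [abs_nonneg (c - μ), sq_abs (c - μ), le_abs_self (c - μ)]
    have : c - μ - S < 0 := by linarith
    exact div_neg_of_neg_of_pos this hσ2
  set a : ℝ := -(θ1 μ σ q c) with ha
  have hapos : 0 < a := by simp [ha]; linarith
  set b : ℝ := (c + Λ) / S with hb
  have hbpos : 0 < b := div_pos (by linarith) hSpos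
  constructor
  · -- (i) ↔ (ii)
    have step : (∀ x : ℝ, 0 ≤ x →
        0 ≤ deriv (fun d : ℝ => (d + Λ) / q * (1 - Real.exp (θ1 μ σ q d * x))) c) ↔
        (∀ x : ℝ, 0 ≤ x → 1 + a * b * x ≤ Real.exp (a * x)) := by
      constructor
      · intro h x hx
        have h0 := h x hx
        have h1 : 0 ≤ q * deriv
            (fun d : ℝ => (d + Λ) / q * (1 - Real.exp (θ1 μ σ q d * x))) c :=
          mul_nonneg hq.le h0
        rw [key c x] at h1
        have h2 : Real.exp (θ1 μ σ q c * x) * (1 - θ1 μ σ q c * b * x) ≤ 1 := by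
          rw [hb]; linarith
        have h3 : Real.exp (-(a * x)) * (1 + a * b * x) ≤ 1 := by
          have : θ1 μ σ q c = -a := by rw [ha]; ring
          rw [this] at h2
          convert h2 using 2 <;> ring
        have := mul_le_mul_of_nonneg_left h3 (Real.exp_pos (a * x)).le
        rw [← mul_assoc, ← Real.exp_add, add_neg_cancel, Real.exp_zero, one_mul,
          mul_one] at this
        exact this
      · intro h x hx
        have h0 := h x hx
        have h2 : Real.exp (-(a * x)) * (1 + a * b * x) ≤ 1 := by
          have := mul_le_mul_of_nonneg_left h0 (Real.exp_pos (-(a * x))).le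
          rwa [← Real.exp_add, neg_add_cancel, Real.exp_zero] at this
        have h3 : 0 ≤ 1 - Real.exp (θ1 μ σ q c * x) * (1 - θ1 μ σ q c * b * x) := by
          have hθa : θ1 μ σ q c = -a := by rw [ha]; ring
          rw [hθa]
          have : Real.exp (-a * x) * (1 + a * b * x) ≤ 1 := by
            convert h2 using 2 <;> ring
          nlinarith [this]
        have h4 : 0 ≤ q * deriv
            (fun d : ℝ => (d + Λ) / q * (1 - Real.exp (θ1 μ σ q d * x))) c := by
          rw [key c x]; rw [hb] at h3; linarith
        nlinarith [h4, hq]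
    rw [step, core_iff hapos hbpos, hb, div_le_one hSpos]
  · -- (ii) ↔ (iii)
    rw [hSdef, hA, Real.le_sqrt (by linarith) (by positivity)]
    constructor <;> intro h <;> nlinarith

end CarbonAbatement
end
end

section
/- Let (S^n)_{n≥0} be a nested sequence of finite subsets of [0,c̄] with S^0 = {0, c̄}, S^n ⊂ S^{n+1}, each containing 0 and c̄, and mesh size δ(S^n) = max of consecutive gaps tending to 0, and define V^n(x,c) = V^{S^n}(x, c̃^n) where c̃^n = max{c' ∈ S^n : c' ≤ c}. Then V^n(x,c) is non-decreasing in n and bounded above by V^{[0,c̄]}(x,c), so the pointwise limit V̄(x,c) = lim_{n→∞} V^n(x,c) exists, and the convergence V^n → V̄ is uniform on [0,∞) × [0,c̄]. -/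
open MeasureTheory ProbabilityTheory Filter Set
open scoped ENNReal NNReal Classical Topology

noncomputable section

namespace CarbonAbatement

variable {Ω : Type*} {mΩ : MeasurableSpace Ω}

/-- `W` is a standard Brownian motion with respect to the filtration `F` under `P`. -/
structure IsStdBM (P : Measure Ω) (F : Filtration ℝ mΩ) (W : ℝ → Ω → ℝ) : Prop where
  meas : ∀ t, StronglyMeasurable (W t)
  adapted : Adapted F W
  start : ∀ ω, W 0 ω = 0
  cont : ∀ ω, Continuous fun t => W t ω
  incr_law : ∀ s t : ℝ, 0 ≤ s → s ≤ t →
      P.map (fun ω => W t ω - W s ω) = gaussianReal 0 ((t - s).toNNReal)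
  incr_indep : ∀ s t : ℝ, 0 ≤ s → s ≤ t →
      Indep (MeasurableSpace.comap (fun ω => W t ω - W s ω) inferInstance) (F s) P

/-- Admissible ratcheting-down emission strategy with rates in `S`, initial rate `c`:
right-continuous, non-increasing, `F`-adapted, values in `S` and below `c`. -/
structure Admissible (F : Filtration ℝ mΩ) (S : Set ℝ) (c : ℝ) (C : ℝ → Ω → ℝ) : Prop where
  mem_S : ∀ ω, ∀ t, 0 ≤ t → C t ω ∈ S
  le_init : ∀ ω, ∀ t, 0 ≤ t → C t ω ≤ c
  antitone : ∀ ω, ∀ s t : ℝ, 0 ≤ s → s ≤ t → C t ω ≤ C s ω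
  rightCont : ∀ ω, ∀ t : ℝ, 0 ≤ t → ContinuousWithinAt (fun s => C s ω) (Ici t) t
  adapted : Adapted F C

/-- Controlled surplus process `X_t^C = x + μ t + σ W_t − ∫_0^t C_s ds`. -/
def surplus (μ σ x : ℝ) (W C : ℝ → Ω → ℝ) (t : ℝ) (ω : Ω) : ℝ :=
  x + μ * t + σ * W t ω - ∫ s in (0:ℝ)..t, C s ω

/-- Depletion time `τ = inf {t ≥ 0 : X t < 0}` (equal to `∞` if the path never gets negative). -/
def depletionTime (X : ℝ → ℝ) : ℝ≥0∞ :=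
  sInf (ENNReal.ofReal '' {t : ℝ | 0 ≤ t ∧ X t < 0})

/-- Expected discounted payoff `J(x;C) = E[∫_0^τ e^{−qs}(C_s + Λ) ds]`. -/
def J (μ σ q Λ x : ℝ) (P : Measure Ω) (W C : ℝ → Ω → ℝ) : ℝ :=
  ∫ ω, (∫ s in {s : ℝ | 0 ≤ s ∧
        ENNReal.ofReal s < depletionTime fun t => surplus μ σ x W C t ω},
      Real.exp (-q * s) * (C s ω + Λ)) ∂P

/-- Optimal value function `V^S(x,c) = sup_{C ∈ Π^S_{x,c}} J(x;C)`. -/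
def V (μ σ q Λ : ℝ) (P : Measure Ω) (F : Filtration ℝ mΩ) (W : ℝ → Ω → ℝ)
    (S : Set ℝ) (x c : ℝ) : ℝ :=
  sSup {r : ℝ | ∃ C : ℝ → Ω → ℝ, Admissible F S c C ∧ r = J μ σ q Λ x P W C}


/-- The mesh size of a finite set `A ⊆ ℝ`: the largest gap between consecutive elements. -/
def meshSize (A : Finset ℝ) : ℝ :=
  sSup {d : ℝ | ∃ a ∈ A, ∃ b ∈ A, a < b ∧ (∀ e ∈ A, e ≤ a ∨ b ≤ e) ∧ d = b - a}

/-- `c̃ = max{c' ∈ A : c' ≤ c}`, the largest element of `A` below `c`. -/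
def ctilde (A : Finset ℝ) (c : ℝ) : ℝ :=
  sSup {a : ℝ | a ∈ A ∧ a ≤ c}


section Aux



/-- Largest element of `A` strictly below `c` (or `0` by convention). -/
def gfun (A : Finset ℝ) (c : ℝ) : ℝ := sSup {a : ℝ | a ∈ A ∧ a < c}

variable {A : Finset ℝ} {c cbar : ℝ}

lemma lt_set_finite (A : Finset ℝ) (c : ℝ) : {a : ℝ | a ∈ A ∧ a < c}.Finite :=
  A.finite_toSet.subset fun a ha => ha.1

lemma le_set_finite (A : Finset ℝ) (c : ℝ) : {a : ℝ | a ∈ A ∧ a ≤ c}.Finite :=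
  A.finite_toSet.subset fun a ha => ha.1

lemma gfun_mem (h0 : (0:ℝ) ∈ A) : gfun A c ∈ A := by
  rcases eq_empty_or_nonempty {a : ℝ | a ∈ A ∧ a < c} with h | h
  · simp [gfun, h, Real.sSup_empty, h0]
  · exact ((h.csSup_mem (lt_set_finite A c)).1)

lemma gfun_nonneg (hA : ∀ a ∈ A, (0:ℝ) ≤ a) : 0 ≤ gfun A c := by
  rcases eq_empty_or_nonempty {a : ℝ | a ∈ A ∧ a < c} with h | h
  · simp [gfun, h, Real.sSup_empty]
  · exact hA _ (h.csSup_mem (lt_set_finite A c)).1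

lemma gfun_le (hc : 0 ≤ c) : gfun A c ≤ c := by
  rcases eq_empty_or_nonempty {a : ℝ | a ∈ A ∧ a < c} with h | h
  · simp [gfun, h, Real.sSup_empty, hc]
  · exact le_of_lt (((h.csSup_mem (lt_set_finite A c))).2)

lemma gfun_lt (h : {a : ℝ | a ∈ A ∧ a < c}.Nonempty) : gfun A c < c :=
  (h.csSup_mem (lt_set_finite A c)).2

lemma gfun_mono (hA : ∀ a ∈ A, (0:ℝ) ≤ a) : Monotone (gfun A) := by
  intro c c' hcc
  rcases eq_empty_or_nonempty {a : ℝ | a ∈ A ∧ a < c} with h | h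
  · simpa [gfun, h, Real.sSup_empty] using gfun_nonneg (c := c') hA
  · exact csSup_le_csSup ((lt_set_finite A c').bddAbove) h
      (fun a ha => ⟨ha.1, lt_of_lt_of_le ha.2 hcc⟩)

lemma gfun_left_const (A : Finset ℝ) (c0 : ℝ) :
    ∃ η > (0:ℝ), ∀ c', c0 - η < c' → c' ≤ c0 → gfun A c' = gfun A c0 := by
  rcases eq_empty_or_nonempty {a : ℝ | a ∈ A ∧ a < c0} with h | h
  · refine ⟨1, one_pos, fun c' _ hle => ?_⟩
    have : {a : ℝ | a ∈ A ∧ a < c'} = ∅ := by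
      apply eq_empty_of_subset_empty; rw [← h]
      exact fun a ha => ⟨ha.1, lt_of_lt_of_le ha.2 hle⟩
    rw [gfun, gfun, this, h]
  · have hmem : gfun A c0 ∈ {a : ℝ | a ∈ A ∧ a < c0} := h.csSup_mem (lt_set_finite A c0)
    refine ⟨c0 - gfun A c0, by linarith [hmem.2], fun c' hlt hle => ?_⟩
    have hset : {a : ℝ | a ∈ A ∧ a < c'} = {a : ℝ | a ∈ A ∧ a < c0} := by
      ext a
      refine ⟨fun ha => ⟨ha.1, lt_of_lt_of_le ha.2 hle⟩, fun ha => ⟨ha.1, ?_⟩⟩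
      have : a ≤ gfun A c0 := le_csSup (lt_set_finite A c0).bddAbove ha
      linarith
    rw [gfun, gfun, hset]

lemma gap_le_meshSize (hsub : ∀ a ∈ A, a ∈ Icc (0:ℝ) cbar) {a b : ℝ}
    (ha : a ∈ A) (hb : b ∈ A) (hab : a < b) (hcons : ∀ e ∈ A, e ≤ a ∨ b ≤ e) :
    b - a ≤ meshSize A := by
  apply le_csSup
  · refine ⟨cbar, fun d hd => ?_⟩
    obtain ⟨a', ha', b', hb', _, _, rfl⟩ := hd
    have h1 := hsub a' ha'; have h2 := hsub b' hb'
    linarith [h1.1, h2.2]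
  · exact ⟨a, ha, b, hb, hab, hcons, rfl⟩

lemma meshSize_nonneg (h0 : (0:ℝ) ∈ A) (hcb : cbar ∈ A) (hcbar : 0 < cbar)
    (hsub : ∀ a ∈ A, a ∈ Icc (0:ℝ) cbar) : 0 ≤ meshSize A := by
  have hne : {a : ℝ | a ∈ A ∧ a < cbar}.Nonempty := ⟨0, h0, hcbar⟩
  have hmem : gfun A cbar ∈ {a : ℝ | a ∈ A ∧ a < cbar} := hne.csSup_mem (lt_set_finite A cbar)
  have hgap : cbar - gfun A cbar ≤ meshSize A := by
    refine gap_le_meshSize hsub hmem.1 hcb hmem.2 (fun e he => ?_)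
    rcases lt_or_ge e cbar with h | h
    · exact Or.inl (le_csSup (lt_set_finite A cbar).bddAbove ⟨he, h⟩)
    · exact Or.inr h
  linarith [hmem.2]

lemma gfun_ge (h0 : (0:ℝ) ∈ A) (hcb : cbar ∈ A) (hcbar : 0 < cbar)
    (hsub : ∀ a ∈ A, a ∈ Icc (0:ℝ) cbar) (hc : c ∈ Icc (0:ℝ) cbar) :
    c - meshSize A ≤ gfun A c := by
  rcases eq_or_lt_of_le hc.1 with h | h
  · have : gfun A c = 0 := by
      have : {a : ℝ | a ∈ A ∧ a < c}.Nonempty → False := by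
        rintro ⟨a, haA, halt⟩
        exact absurd halt (not_lt.2 (h ▸ (hsub a haA).1))
      rcases eq_empty_or_nonempty {a : ℝ | a ∈ A ∧ a < c} with he | hne
      · simp [gfun, he, Real.sSup_empty]
      · exact absurd hne this
    rw [this]
    have := meshSize_nonneg h0 hcb hcbar hsub
    linarith
  · -- 0 < c
    have hne : {a : ℝ | a ∈ A ∧ a < c}.Nonempty := ⟨0, h0, h⟩
    have hmemA : gfun A c ∈ A := gfun_mem h0
    have hlt : gfun A c < c := gfun_lt hne
    -- the smallest element ≥ c
    have hBne : ({a ∈ A | c ≤ a} : Finset ℝ).Nonempty := by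
      refine ⟨cbar, ?_⟩
      simp only [Finset.mem_filter]
      exact ⟨hcb, hc.2⟩
    set b := ({a ∈ A | c ≤ a} : Finset ℝ).min' hBne with hbdef
    have hbmem : b ∈ ({a ∈ A | c ≤ a} : Finset ℝ) := Finset.min'_mem _ _
    simp only [Finset.mem_filter] at hbmem
    have hgap : b - gfun A c ≤ meshSize A := by
      refine gap_le_meshSize hsub hmemA hbmem.1 (lt_of_lt_of_le hlt hbmem.2) (fun e he => ?_)
      rcases lt_or_ge e c with hcase | hcase
      · exact Or.inl (le_csSup (lt_set_finite A c).bddAbove ⟨he, hcase⟩)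
      · refine Or.inr (Finset.min'_le _ _ ?_)
        simp only [Finset.mem_filter]; exact ⟨he, hcase⟩
    linarith [hbmem.2]

lemma ctilde_mem (h0 : (0:ℝ) ∈ A) (hc : 0 ≤ c) : ctilde A c ∈ A := by
  have hne : ({a : ℝ | a ∈ A ∧ a ≤ c}).Nonempty := ⟨0, h0, hc⟩
  exact (hne.csSup_mem (le_set_finite A c)).1

lemma ctilde_nonneg (h0 : (0:ℝ) ∈ A) (hc : 0 ≤ c) : 0 ≤ ctilde A c :=
  le_csSup (le_set_finite A c).bddAbove ⟨h0, hc⟩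

lemma ctilde_le (h0 : (0:ℝ) ∈ A) (hc : 0 ≤ c) : ctilde A c ≤ c :=
  csSup_le ⟨0, h0, hc⟩ (fun a ha => ha.2)

lemma ctilde_mono_set {B : Finset ℝ} (h0 : (0:ℝ) ∈ A) (hc : 0 ≤ c) (hAB : A ⊆ B) :
    ctilde A c ≤ ctilde B c :=
  csSup_le_csSup (le_set_finite B c).bddAbove ⟨0, h0, hc⟩
    (fun a ha => ⟨hAB ha.1, ha.2⟩)

lemma gfun_le_ctilde (h0 : (0:ℝ) ∈ A) (hc : 0 ≤ c) : gfun A c ≤ ctilde A c := by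
  rcases eq_empty_or_nonempty {a : ℝ | a ∈ A ∧ a < c} with h | h
  · rw [gfun, h, Real.sSup_empty]; exact ctilde_nonneg h0 hc
  · exact csSup_le_csSup (le_set_finite A c).bddAbove h (fun a ha => ⟨ha.1, le_of_lt ha.2⟩)


variable {q Λ cbar : ℝ}

lemma exp_integrableOn_Ici (hq : 0 < q) :
    IntegrableOn (fun s : ℝ => Real.exp (-q * s)) (Ici (0:ℝ)) := by
  rw [integrableOn_Ici_iff_integrableOn_Ioi]
  exact exp_neg_integrableOn_Ioi 0 hq

lemma integral_exp_Ici (hq : 0 < q) :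
    ∫ s in Ici (0:ℝ), Real.exp (-q * s) = 1 / q := by
  rw [MeasureTheory.integral_Ici_eq_integral_Ioi]
  have h := integral_comp_mul_left_Ioi (fun u => Real.exp (-u)) 0 hq
  simp only [mul_zero, integral_exp_neg_Ioi, neg_zero, Real.exp_zero, smul_eq_mul,
    mul_one] at h
  have : ∀ s : ℝ, Real.exp (-q * s) = Real.exp (-(q * s)) := by intro s; ring_nf
  simp only [this]
  rw [h]; ring

lemma measurableSet_domain (d : ℝ≥0∞) :
    MeasurableSet {s : ℝ | 0 ≤ s ∧ ENNReal.ofReal s < d} := by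
  have : {s : ℝ | 0 ≤ s ∧ ENNReal.ofReal s < d}
      = Ici 0 ∩ (fun s : ℝ => ENNReal.ofReal s) ⁻¹' (Iio d) := rfl
  rw [this]
  exact measurableSet_Ici.inter (ENNReal.measurable_ofReal measurableSet_Iio)

lemma domain_subset (d : ℝ≥0∞) :
    {s : ℝ | 0 ≤ s ∧ ENNReal.ofReal s < d} ⊆ Ici 0 := fun s hs => hs.1

lemma payoff_meas (hq : 0 < q) {f : ℝ → ℝ} (hf : Measurable f) :
    Measurable (fun s => Real.exp (-q * s) * (f s + Λ)) :=
  ((Real.measurable_exp.comp ((measurable_const.mul measurable_id'))).mul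
    (hf.add_const Λ))

lemma inner_integrable (hq : 0 < q) (hΛ : 0 < Λ) {f : ℝ → ℝ}
    (hf : Measurable f) (hmem : ∀ s, f s ∈ Icc (0:ℝ) cbar)
    {B : Set ℝ} (hB : MeasurableSet B) (hB0 : B ⊆ Ici 0) :
    IntegrableOn (fun s => Real.exp (-q * s) * (f s + Λ)) B := by
  have hΦI : IntegrableOn (fun s : ℝ => Real.exp (-q * s) * (cbar + Λ)) (Ici 0) :=
    (exp_integrableOn_Ici hq).mul_const _
  have hΦ : IntegrableOn (fun s : ℝ => Real.exp (-q * s) * (cbar + Λ)) B :=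
    hΦI.mono_set hB0
  refine Integrable.mono hΦ (payoff_meas hq hf).aestronglyMeasurable ?_
  filter_upwards with s
  have h1 := (hmem s).1; have h2 := (hmem s).2
  rw [Real.norm_eq_abs, Real.norm_eq_abs,
    abs_of_nonneg (mul_nonneg (Real.exp_pos _).le (by linarith)),
    abs_of_nonneg (mul_nonneg (Real.exp_pos _).le (by nlinarith))]
  have := Real.exp_pos (-q * s)
  nlinarith

lemma inner_nonneg (hq : 0 < q) (hΛ : 0 < Λ) {f : ℝ → ℝ}
    (hmem : ∀ s, f s ∈ Icc (0:ℝ) cbar) {B : Set ℝ} (hB : MeasurableSet B) :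
    0 ≤ ∫ s in B, Real.exp (-q * s) * (f s + Λ) := by
  refine setIntegral_nonneg hB (fun s _ => ?_)
  have := (hmem s).1; positivity

lemma exp_setIntegral_le (hq : 0 < q) {B : Set ℝ} (hB : MeasurableSet B)
    (hB0 : B ⊆ Ici 0) :
    ∫ s in B, Real.exp (-q * s) ≤ 1 / q := by
  rw [← integral_exp_Ici hq]
  refine setIntegral_mono_set (exp_integrableOn_Ici hq) ?_ (HasSubset.Subset.eventuallyLE hB0)
  filter_upwards with s using (Real.exp_pos _).le

lemma inner_le (hq : 0 < q) (hΛ : 0 < Λ) {f : ℝ → ℝ}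
    (hf : Measurable f) (hmem : ∀ s, f s ∈ Icc (0:ℝ) cbar)
    {B : Set ℝ} (hB : MeasurableSet B) (hB0 : B ⊆ Ici 0) :
    ∫ s in B, Real.exp (-q * s) * (f s + Λ) ≤ (cbar + Λ) / q := by
  have hΦI : IntegrableOn (fun s : ℝ => Real.exp (-q * s) * (cbar + Λ)) (Ici 0) :=
    (exp_integrableOn_Ici hq).mul_const _
  have hΦB : IntegrableOn (fun s : ℝ => Real.exp (-q * s) * (cbar + Λ)) B :=
    hΦI.mono_set hB0
  calc ∫ s in B, Real.exp (-q * s) * (f s + Λ)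
      ≤ ∫ s in B, Real.exp (-q * s) * (cbar + Λ) := by
        refine setIntegral_mono_on (inner_integrable hq hΛ hf hmem hB hB0) hΦB hB
          (fun s _ => ?_)
        have := (hmem s).2
        have := (Real.exp_pos (-q * s)).le
        nlinarith
    _ ≤ ∫ s in Ici 0, Real.exp (-q * s) * (cbar + Λ) := by
        refine setIntegral_mono_set hΦI ?_
          (HasSubset.Subset.eventuallyLE hB0)
        have hcΛ : 0 ≤ cbar + Λ := by
          rcases (hmem 0) with ⟨h1, h2⟩; linarith
        filter_upwards with s
        positivity
    _ = (cbar + Λ) / q := by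
        rw [integral_mul_const, integral_exp_Ici hq]; ring


end Aux


section Prob

variable {μ σ q Λ cbar x c : ℝ} {P : Measure Ω} {F : Filtration ℝ mΩ}
  {W : ℝ → Ω → ℝ} {S : Set ℝ} {C : ℝ → Ω → ℝ}

lemma path_antitone (hC : Admissible F S c C) (ω : Ω) :
    Antitone (fun s => C (max s 0) ω) := fun s t hst =>
  hC.antitone ω _ _ (le_max_right s 0) (max_le_max hst le_rfl)

lemma path_mem (hS : S ⊆ Icc 0 cbar) (hC : Admissible F S c C) (ω : Ω) (s : ℝ) :
    C (max s 0) ω ∈ Icc (0:ℝ) cbar :=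
  hS (hC.mem_S ω _ (le_max_right s 0))

/-- The inner (time) integral in the definition of `J`, for a fixed scenario `ω`. -/
def innerJ (μ σ q Λ x : ℝ) (W C : ℝ → Ω → ℝ) (ω : Ω) : ℝ :=
  ∫ s in {s : ℝ | 0 ≤ s ∧
      ENNReal.ofReal s < depletionTime fun t => surplus μ σ x W C t ω},
    Real.exp (-q * s) * (C s ω + Λ)

lemma J_eq_integral_innerJ :
    J μ σ q Λ x P W C = ∫ ω, innerJ μ σ q Λ x W C ω ∂P := rfl

lemma innerJ_congr (ω : Ω) :
    innerJ μ σ q Λ x W C ω =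
      ∫ s in {s : ℝ | 0 ≤ s ∧
          ENNReal.ofReal s < depletionTime fun t => surplus μ σ x W C t ω},
        Real.exp (-q * s) * (C (max s 0) ω + Λ) := by
  refine setIntegral_congr_fun (measurableSet_domain _) (fun s hs => ?_)
  rw [max_eq_left hs.1]

lemma innerJ_bounds (hq : 0 < q) (hΛ : 0 < Λ) (hS : S ⊆ Icc 0 cbar)
    (hC : Admissible F S c C) (ω : Ω) :
    0 ≤ innerJ μ σ q Λ x W C ω ∧ innerJ μ σ q Λ x W C ω ≤ (cbar + Λ) / q := by
  rw [innerJ_congr]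
  exact ⟨inner_nonneg hq hΛ (path_mem hS hC ω) (measurableSet_domain _),
    inner_le hq hΛ (path_antitone hC ω).measurable (path_mem hS hC ω)
      (measurableSet_domain _) (domain_subset _)⟩

lemma cbar_nonneg_of_admissible (hS : S ⊆ Icc 0 cbar) (hC : Admissible F S c C)
    [Nonempty Ω] : 0 ≤ cbar := by
  obtain ⟨ω⟩ := ‹Nonempty Ω›
  have := path_mem hS hC ω 0
  exact le_trans this.1 this.2

lemma J_bounds (hq : 0 < q) (hΛ : 0 < Λ) [IsProbabilityMeasure P]
    (hS : S ⊆ Icc 0 cbar) (hC : Admissible F S c C) :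
    0 ≤ J μ σ q Λ x P W C ∧ J μ σ q Λ x P W C ≤ (cbar + Λ) / q := by
  have : Nonempty Ω := by
    by_contra h
    rw [not_nonempty_iff] at h
    exact (IsProbabilityMeasure.ne_zero P) (by simp [eq_iff_true_of_subsingleton])
  have hcbar : 0 ≤ cbar := cbar_nonneg_of_admissible hS hC
  have hM : 0 < (cbar + Λ) / q := div_pos (by linarith) hq
  rw [J_eq_integral_innerJ]
  constructor
  · exact integral_nonneg (fun ω => (innerJ_bounds hq hΛ hS hC ω).1)
  · by_cases hInt : Integrable (innerJ μ σ q Λ x W C) P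
    · calc ∫ ω, innerJ μ σ q Λ x W C ω ∂P
          ≤ ∫ _, (cbar + Λ) / q ∂P :=
            integral_mono hInt (integrable_const _)
              (fun ω => (innerJ_bounds hq hΛ hS hC ω).2)
        _ = (cbar + Λ) / q := by simp
    · rw [integral_undef hInt]; exact hM.le

lemma admissible_zero (h0 : (0:ℝ) ∈ S) (hc : 0 ≤ c) :
    Admissible (Ω := Ω) F S c (fun _ _ => 0) :=
  ⟨fun _ _ _ => h0, fun _ _ _ => hc, fun _ _ _ _ _ => le_rfl,
    fun _ _ _ => continuousWithinAt_const, fun _ => measurable_const⟩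

lemma TT_nonempty (h0 : (0:ℝ) ∈ S) (hc : 0 ≤ c) :
    {r : ℝ | ∃ C : ℝ → Ω → ℝ, Admissible F S c C ∧
      r = J μ σ q Λ x P W C}.Nonempty :=
  ⟨_, ⟨fun _ _ => 0, admissible_zero h0 hc, rfl⟩⟩

lemma TT_bddAbove (hq : 0 < q) (hΛ : 0 < Λ) [IsProbabilityMeasure P]
    (hS : S ⊆ Icc 0 cbar) :
    BddAbove {r : ℝ | ∃ C : ℝ → Ω → ℝ, Admissible F S c C ∧
      r = J μ σ q Λ x P W C} := by
  refine ⟨(cbar + Λ) / q, fun r hr => ?_⟩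
  obtain ⟨C, hC, rfl⟩ := hr
  exact (J_bounds hq hΛ hS hC).2

lemma V_nonneg (hq : 0 < q) (hΛ : 0 < Λ) [IsProbabilityMeasure P]
    (hS : S ⊆ Icc 0 cbar) (h0 : (0:ℝ) ∈ S) (hc : 0 ≤ c) :
    0 ≤ V μ σ q Λ P F W S x c := by
  have h1 : J μ σ q Λ x P W (fun _ _ => (0:ℝ)) ≤ V μ σ q Λ P F W S x c :=
    le_csSup (TT_bddAbove hq hΛ hS) ⟨fun _ _ => 0, admissible_zero h0 hc, rfl⟩
  exact le_trans (J_bounds hq hΛ hS (admissible_zero (F := F) h0 hc)).1 h1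

lemma V_mono (hq : 0 < q) (hΛ : 0 < Λ) [IsProbabilityMeasure P]
    {S' : Set ℝ} (hS' : S' ⊆ Icc 0 cbar) (hsub : S ⊆ S') {c' : ℝ} (hcc : c ≤ c')
    (h0 : (0:ℝ) ∈ S) (hc : 0 ≤ c) :
    V μ σ q Λ P F W S x c ≤ V μ σ q Λ P F W S' x c' := by
  refine csSup_le_csSup (TT_bddAbove hq hΛ hS') (TT_nonempty h0 hc) ?_
  rintro r ⟨C, hC, rfl⟩
  exact ⟨C, ⟨fun ω t ht => hsub (hC.mem_S ω t ht),
    fun ω t ht => le_trans (hC.le_init ω t ht) hcc,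
    hC.antitone, hC.rightCont, hC.adapted⟩, rfl⟩

end Prob


section Meas

variable {μ σ q Λ cbar x c : ℝ} {P : Measure Ω} {F : Filtration ℝ mΩ}
  {W : ℝ → Ω → ℝ} {S : Set ℝ} {C : ℝ → Ω → ℝ}

lemma adapted_meas (hC : Admissible F S c C) (t : ℝ) : Measurable fun ω => C t ω :=
  (hC.adapted t).mono (F.le t) le_rfl

lemma ratchet_joint_meas (hC : Admissible F S c C) :
    Measurable (fun p : Ω × ℝ => C (max p.2 0) p.1) := by
  have hmeasn : ∀ n : ℕ,
      Measurable (fun p : Ω × ℝ => C ((⌈max p.2 0 * 2 ^ n⌉ : ℤ) / 2 ^ n) p.1) := by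
    intro n
    have h1 : Measurable (fun z : Ω × ℤ => C ((z.2 : ℝ) / 2 ^ n) z.1) :=
      measurable_from_prod_countable_left (fun m : ℤ => adapted_meas hC (((m : ℝ)) / 2 ^ n))
    have h2 : Measurable (fun p : Ω × ℝ => (p.1, (⌈max p.2 0 * 2 ^ n⌉ : ℤ))) := by
      refine measurable_fst.prodMk (Int.measurable_ceil.comp ?_)
      exact (measurable_snd.max measurable_const).mul_const _
    exact h1.comp h2
  refine measurable_of_tendsto_metrizable hmeasn (tendsto_pi_nhds.2 fun p => ?_)
  set u : ℝ := max p.2 0 with hu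
  have hu0 : 0 ≤ u := le_max_right _ _
  have hrc := hC.rightCont p.1 u hu0
  set t : ℕ → ℝ := fun n => ((⌈u * 2 ^ n⌉ : ℤ) : ℝ) / 2 ^ n with ht
  have htu : ∀ n, u ≤ t n := by
    intro n
    rw [ht, le_div_iff₀ (by positivity : (0:ℝ) < 2 ^ n)]
    exact Int.le_ceil _
  have htub : ∀ n, t n ≤ u + (1 / 2) ^ n := by
    intro n
    rw [ht, div_le_iff₀ (by positivity : (0:ℝ) < 2 ^ n)]
    have := (Int.ceil_lt_add_one (u * 2 ^ n)).le
    have h2n : ((1:ℝ) / 2) ^ n * 2 ^ n = 1 := by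
      rw [div_pow, one_pow, div_mul_cancel₀]; positivity
    nlinarith [this]
  have htt : Tendsto t atTop (𝓝 u) := by
    have hup : Tendsto (fun n : ℕ => u + (1 / 2 : ℝ) ^ n) atTop (𝓝 (u + 0)) :=
      tendsto_const_nhds.add (tendsto_pow_atTop_nhds_zero_of_lt_one (by norm_num) (by norm_num))
    rw [add_zero] at hup
    exact tendsto_of_tendsto_of_tendsto_of_le_of_le tendsto_const_nhds hup htu htub
  have htt' : Tendsto t atTop (𝓝[Ici u] u) :=
    tendsto_nhdsWithin_of_tendsto_nhds_of_eventually_within _ htt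
      (Eventually.of_forall fun n => htu n)
  exact hrc.tendsto.comp htt'

lemma section_meas {G : Ω × ℝ → ℝ} (hG : Measurable G) (ω : Ω) :
    Measurable fun s => G (ω, s) :=
  hG.comp (measurable_const.prodMk measurable_id)

lemma meas_param_integral {G : Ω × ℝ → ℝ} (hG : Measurable G) {r : ℝ} (hr : 0 ≤ r) :
    Measurable fun ω => ∫ s in (0:ℝ)..r, G (ω, s) := by
  have hrep : ∀ ω, ∫ s in (0:ℝ)..r, G (ω, s)
      = ∫ s, (fun p : Ω × ℝ => if p.2 ∈ Ioc (0:ℝ) r then G p else 0) (ω, s) := by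
    intro ω
    rw [intervalIntegral.integral_of_le hr, ← integral_indicator measurableSet_Ioc]
    congr 1
    ext s
    simp [Set.indicator_apply]
  simp_rw [hrep]
  refine (StronglyMeasurable.integral_prod_right' (f := fun p : Ω × ℝ =>
    if p.2 ∈ Ioc (0:ℝ) r then G p else 0) ?_).measurable
  refine (Measurable.ite ?_ hG measurable_const).stronglyMeasurable
  exact measurable_snd measurableSet_Ioc

lemma depletionTime_eq_iInf {X : ℝ → ℝ} (hX : ContinuousOn X (Ici 0)) :
    depletionTime X = ⨅ (r : ℚ), ⨅ (_ : 0 ≤ (r:ℝ) ∧ X r < 0), ENNReal.ofReal (r:ℝ) := by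
  apply le_antisymm
  · exact le_iInf fun r => le_iInf fun hr => sInf_le ⟨r, ⟨hr.1, hr.2⟩, rfl⟩
  · refine le_sInf ?_
    rintro y ⟨t, ⟨ht0, htneg⟩, rfl⟩
    refine ENNReal.le_of_forall_pos_le_add fun ε hε _ => ?_
    have hnb : X ⁻¹' Iio 0 ∈ 𝓝[Ici 0] t := hX t ht0 (Iio_mem_nhds htneg)
    obtain ⟨η, hη, hball⟩ := Metric.mem_nhdsWithin_iff.1 hnb
    have hlt : t < t + min η ε := by
      have : (0:ℝ) < min η ε := lt_min hη (by exact_mod_cast hε)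
      linarith
    obtain ⟨r, hr1, hr2⟩ := exists_rat_btwn hlt
    have hr0 : 0 ≤ (r:ℝ) := le_trans ht0 hr1.le
    have hrneg : X r < 0 := by
      refine hball ⟨?_, le_trans ht0 hr1.le⟩
      rw [Metric.mem_ball, Real.dist_eq, abs_of_pos (by linarith)]
      have : (r:ℝ) < t + η := lt_of_lt_of_le hr2 (by simp [min_le_left])
      linarith
    calc (⨅ (r : ℚ), ⨅ (_ : 0 ≤ (r:ℝ) ∧ X r < 0), ENNReal.ofReal (r:ℝ))
        ≤ ENNReal.ofReal (r:ℝ) := iInf_le_of_le r (iInf_le_of_le ⟨hr0, hrneg⟩ le_rfl)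
      _ ≤ ENNReal.ofReal (t + ε) := ENNReal.ofReal_le_ofReal
          (le_trans hr2.le (by simp [min_le_right]))
      _ = ENNReal.ofReal t + ε := by
          rw [ENNReal.ofReal_add ht0 ε.coe_nonneg, ENNReal.ofReal_coe_nnreal]

lemma meas_depletionTime {D : ℝ → Ω → ℝ}
    (hmeas : ∀ r : ℝ, 0 ≤ r → Measurable fun ω => surplus μ σ x W D r ω)
    (hcont : ∀ ω, ContinuousOn (fun t => surplus μ σ x W D t ω) (Ici 0)) :
    Measurable fun ω => depletionTime fun t => surplus μ σ x W D t ω := by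
  have hrep : (fun ω => depletionTime fun t => surplus μ σ x W D t ω)
      = fun ω => ⨅ (r : ℚ), ⨅ (_ : 0 ≤ (r:ℝ) ∧ surplus μ σ x W D r ω < 0),
          ENNReal.ofReal (r:ℝ) :=
    funext fun ω => depletionTime_eq_iInf (hcont ω)
  rw [hrep]
  refine Measurable.iInf fun r => ?_
  by_cases hr : 0 ≤ (r:ℝ)
  · have : (fun ω => ⨅ (_ : 0 ≤ (r:ℝ) ∧ surplus μ σ x W D r ω < 0),
        ENNReal.ofReal (r:ℝ))
        = fun ω => if surplus μ σ x W D r ω < 0 then ENNReal.ofReal (r:ℝ) else ⊤ := by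
      funext ω
      rw [iInf_eq_if, if_congr (and_iff_right hr) rfl rfl]
    rw [this]
    exact Measurable.ite (measurableSet_lt (hmeas r hr) measurable_const)
      measurable_const measurable_const
  · have : (fun ω => ⨅ (_ : 0 ≤ (r:ℝ) ∧ surplus μ σ x W D r ω < 0),
        ENNReal.ofReal (r:ℝ)) = fun _ => (⊤ : ℝ≥0∞) := by
      funext ω
      rw [iInf_eq_if, if_neg (fun h => hr h.1)]
    rw [this]
    exact measurable_const

lemma innerJ_meas {D : ℝ → Ω → ℝ}
    (hjoint : Measurable fun p : Ω × ℝ => D (max p.2 0) p.1)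
    (hτ : Measurable fun ω => depletionTime fun t => surplus μ σ x W D t ω) :
    Measurable (innerJ (Ω := Ω) μ σ q Λ x W D) := by
  set G : Ω × ℝ → ℝ := fun p =>
    if 0 ≤ p.2 ∧ ENNReal.ofReal p.2 < (depletionTime fun t => surplus μ σ x W D t p.1)
    then Real.exp (-q * p.2) * (D (max p.2 0) p.1 + Λ) else 0 with hG
  have hrep : ∀ ω, innerJ μ σ q Λ x W D ω = ∫ s, G (ω, s) := by
    intro ω
    rw [innerJ, ← integral_indicator (measurableSet_domain _)]
    congr 1
    ext s
    simp only [Set.indicator_apply, hG, mem_setOf_eq]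
    split_ifs with h
    · rw [max_eq_left h.1]
    · rfl
  have hGmeas : Measurable G := by
    refine Measurable.ite ?_ ?_ measurable_const
    · have h1 : MeasurableSet {p : Ω × ℝ | 0 ≤ p.2} :=
        measurable_snd measurableSet_Ici
      have h2 : MeasurableSet {p : Ω × ℝ | ENNReal.ofReal p.2 <
          (depletionTime fun t => surplus μ σ x W D t p.1)} :=
        measurableSet_lt (ENNReal.measurable_ofReal.comp measurable_snd)
          (hτ.comp measurable_fst)
      exact h1.inter h2
    · exact ((Real.measurable_exp.comp (measurable_snd.const_mul (-q))).mul
        (hjoint.add_const Λ))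
  have : innerJ (Ω := Ω) μ σ q Λ x W D = fun ω => ∫ s, G (ω, s) := funext hrep
  rw [this]
  exact (StronglyMeasurable.integral_prod_right' hGmeas.stronglyMeasurable).measurable

end Meas


section Lower

variable {μ σ q Λ cbar x c : ℝ} {P : Measure Ω} {F : Filtration ℝ mΩ}
  {W : ℝ → Ω → ℝ}

lemma V_discrete_lower (hq : 0 < q) (hΛ : 0 < Λ) (hcbar : 0 < cbar)
    [IsProbabilityMeasure P] (hW : ∀ t, StronglyMeasurable (W t))
    (hWcont : ∀ ω, Continuous fun t => W t ω)
    (A : Finset ℝ) (h0A : (0:ℝ) ∈ A) (hcbA : cbar ∈ A)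
    (hAsub : ∀ a ∈ A, a ∈ Icc (0:ℝ) cbar)
    (hc : c ∈ Icc (0:ℝ) cbar) :
    V μ σ q Λ P F W (Icc 0 cbar) x c ≤
      V μ σ q Λ P F W (A : Set ℝ) x (ctilde A c) + meshSize A / q := by
  classical
  have hAnn : ∀ a ∈ A, (0:ℝ) ≤ a := fun a ha => (hAsub a ha).1
  have hAsub' : (A : Set ℝ) ⊆ Icc 0 cbar := fun a ha => hAsub a ha
  have hmesh0 : 0 ≤ meshSize A := meshSize_nonneg h0A hcbA hcbar hAsub
  have h0Icc : (0:ℝ) ∈ Icc (0:ℝ) cbar := ⟨le_rfl, hcbar.le⟩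
  refine csSup_le (TT_nonempty h0Icc hc.1) ?_
  rintro r ⟨C, hC, rfl⟩
  set D : ℝ → Ω → ℝ := fun s ω => gfun A (C s ω) with hDdef
  have hCmem : ∀ ω (s : ℝ), 0 ≤ s → C s ω ∈ Icc (0:ℝ) cbar := fun ω s hs =>
    hC.mem_S ω s hs
  have hDmemA : ∀ ω (s : ℝ), D s ω ∈ (A : Set ℝ) := fun ω s => gfun_mem h0A
  have hDleC : ∀ ω (s : ℝ), 0 ≤ s → D s ω ≤ C s ω := fun ω s hs =>
    gfun_le (hCmem ω s hs).1
  -- Admissibility of the discretised strategy.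
  have hDadm : Admissible F (A : Set ℝ) (ctilde A c) D := by
    refine ⟨fun ω t _ => hDmemA ω t, ?_, ?_, ?_, ?_⟩
    · intro ω t ht
      calc D t ω ≤ gfun A c := gfun_mono hAnn (hC.le_init ω t ht)
        _ ≤ ctilde A c := gfun_le_ctilde h0A hc.1
    · intro ω s t hs hst
      exact gfun_mono hAnn (hC.antitone ω s t hs hst)
    · intro ω t ht
      obtain ⟨η, hη, hconst⟩ := gfun_left_const A (C t ω)
      have h1 : ∀ᶠ s in 𝓝[Ici t] t, C s ω ∈ Ioi (C t ω - η) :=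
        (hC.rightCont ω t ht) (Ioi_mem_nhds (by linarith))
      have h2 : ∀ᶠ s in 𝓝[Ici t] t, s ∈ Ici t := self_mem_nhdsWithin
      have hev : ∀ᶠ s in 𝓝[Ici t] t, D s ω = D t ω := by
        filter_upwards [h1, h2] with s hs1 hs2
        exact hconst (C s ω) hs1 (hC.antitone ω t s ht hs2)
      exact Filter.Tendsto.congr' (hev.mono fun s h => h.symm) tendsto_const_nhds
    · intro t
      exact ((gfun_mono hAnn).measurable.comp
        (hC.adapted t))
  -- Surplus comparison.
  have hsurp : ∀ ω (t : ℝ), 0 ≤ t →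
      surplus μ σ x W C t ω ≤ surplus μ σ x W D t ω := by
    intro ω t ht
    have hCa : AntitoneOn (fun s => C s ω) (uIcc 0 t) := by
      rw [uIcc_of_le ht]
      exact fun a ha b _ hab => hC.antitone ω a b ha.1 hab
    have hDa : AntitoneOn (fun s => D s ω) (uIcc 0 t) := fun a ha b hb hab =>
      gfun_mono hAnn (hCa ha hb hab)
    have hint : ∫ s in (0:ℝ)..t, D s ω ≤ ∫ s in (0:ℝ)..t, C s ω := by
      refine intervalIntegral.integral_mono_on ht hDa.intervalIntegrable
        hCa.intervalIntegrable ?_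
      intro s hs
      exact hDleC ω s hs.1
    simp only [surplus]
    linarith
  have hτle : ∀ ω, (depletionTime fun t => surplus μ σ x W C t ω)
      ≤ depletionTime fun t => surplus μ σ x W D t ω := by
    intro ω
    refine sInf_le_sInf (image_mono ?_)
    rintro t ⟨ht0, htneg⟩
    exact ⟨ht0, lt_of_le_of_lt (hsurp ω t ht0) htneg⟩
  -- Pointwise comparison of the inner integrals.
  have hinner : ∀ ω, innerJ μ σ q Λ x W C ω
      ≤ innerJ μ σ q Λ x W D ω + meshSize A / q := by
    intro ω
    set B₁ := {s : ℝ | 0 ≤ s ∧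
      ENNReal.ofReal s < depletionTime fun t => surplus μ σ x W C t ω} with hB₁
    set B₂ := {s : ℝ | 0 ≤ s ∧
      ENNReal.ofReal s < depletionTime fun t => surplus μ σ x W D t ω} with hB₂
    have hB₁m : MeasurableSet B₁ := measurableSet_domain _
    have hB₂m : MeasurableSet B₂ := measurableSet_domain _
    have hB₁0 : B₁ ⊆ Ici 0 := domain_subset _
    have hB₂0 : B₂ ⊆ Ici 0 := domain_subset _
    have hsub12 : B₁ ⊆ B₂ := fun s hs => ⟨hs.1, lt_of_lt_of_le hs.2 (hτle ω)⟩
    set f : ℝ → ℝ := fun s => C (max s 0) ω with hfdef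
    set d : ℝ → ℝ := fun s => gfun A (f s) with hddef
    have hfm : Measurable f := (path_antitone hC ω).measurable
    have hdm : Measurable d := (gfun_mono hAnn).measurable.comp hfm
    have hfmem : ∀ s, f s ∈ Icc (0:ℝ) cbar := fun s => hCmem ω _ (le_max_right _ _)
    have hdmem : ∀ s, d s ∈ Icc (0:ℝ) cbar := fun s => hAsub _ (gfun_mem h0A)
    have hfd : ∀ s, f s - meshSize A ≤ d s := fun s =>
      gfun_ge h0A hcbA hcbar hAsub (hfmem s)
    have hexpB₁ : IntegrableOn (fun s => Real.exp (-q * s)) B₁ :=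
      (exp_integrableOn_Ici hq).mono_set hB₁0
    have hstep1 : innerJ μ σ q Λ x W C ω
        = ∫ s in B₁, Real.exp (-q * s) * (f s + Λ) := innerJ_congr ω
    have hstep5 : innerJ μ σ q Λ x W D ω
        = ∫ s in B₂, Real.exp (-q * s) * (d s + Λ) := innerJ_congr ω
    calc innerJ μ σ q Λ x W C ω
        = ∫ s in B₁, Real.exp (-q * s) * (f s + Λ) := hstep1
      _ ≤ ∫ s in B₁, (Real.exp (-q * s) * (d s + Λ)
            + Real.exp (-q * s) * meshSize A) := by
          refine setIntegral_mono_on (inner_integrable hq hΛ hfm hfmem hB₁m hB₁0)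
            ((inner_integrable hq hΛ hdm hdmem hB₁m hB₁0).add
              (hexpB₁.mul_const _)) hB₁m ?_
          intro s _
          have h1 := hfd s
          have h2 := (Real.exp_pos (-q * s)).le
          nlinarith
      _ = (∫ s in B₁, Real.exp (-q * s) * (d s + Λ))
            + (∫ s in B₁, Real.exp (-q * s)) * meshSize A := by
          rw [integral_add (inner_integrable hq hΛ hdm hdmem hB₁m hB₁0)
            (hexpB₁.mul_const _), integral_mul_const]
      _ ≤ (∫ s in B₂, Real.exp (-q * s) * (d s + Λ)) + (1 / q) * meshSize A := by
          refine add_le_add ?_ ?_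
          · refine setIntegral_mono_set (inner_integrable hq hΛ hdm hdmem hB₂m hB₂0)
              ?_ (HasSubset.Subset.eventuallyLE hsub12)
            filter_upwards with s
            exact mul_nonneg (Real.exp_pos _).le (by linarith [(hdmem s).1])
          · exact mul_le_mul_of_nonneg_right (exp_setIntegral_le hq hB₁m hB₁0) hmesh0
      _ = innerJ μ σ q Λ x W D ω + meshSize A / q := by
          rw [hstep5]; ring
  -- Joint measurability facts needed for integrability of `innerJ D`.
  have hjointmax : Measurable fun p : Ω × ℝ => D (max p.2 0) p.1 :=
    (gfun_mono hAnn).measurable.comp (ratchet_joint_meas hC)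
  have hintcongr : ∀ (r : ℝ), 0 ≤ r → ∀ ω,
      ∫ s in (0:ℝ)..r, D s ω = ∫ s in (0:ℝ)..r, D (max s 0) ω := by
    intro r hr ω
    refine intervalIntegral.integral_congr ?_
    intro s hs
    rw [uIcc_of_le hr] at hs
    show D s ω = D (max s 0) ω
    rw [max_eq_left hs.1]
  have hsurpmeas : ∀ (r : ℝ), 0 ≤ r → Measurable fun ω => surplus μ σ x W D r ω := by
    intro r hr
    have h1 : Measurable fun ω => ∫ s in (0:ℝ)..r, D (max s 0) ω :=
      meas_param_integral (G := fun p : Ω × ℝ => D (max p.2 0) p.1) hjointmax hr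
    have h2 : (fun ω => surplus μ σ x W D r ω)
        = fun ω => x + μ * r + σ * W r ω - ∫ s in (0:ℝ)..r, D (max s 0) ω := by
      funext ω
      simp only [surplus]
      rw [hintcongr r hr ω]
    rw [h2]
    exact (measurable_const.add ((hW r).measurable.const_mul σ)).sub h1
  have hsurpcont : ∀ ω, ContinuousOn (fun t => surplus μ σ x W D t ω) (Ici 0) := by
    intro ω
    have hDanti : Antitone fun s => D (max s 0) ω := fun s t hst =>
      gfun_mono hAnn (path_antitone hC ω hst)
    have hcont0 : Continuous fun t => ∫ s in (0:ℝ)..t, D (max s 0) ω :=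
      intervalIntegral.continuous_primitive
        (fun a b => (hDanti.antitoneOn _).intervalIntegrable) 0
    have hbig : Continuous fun t =>
        x + μ * t + σ * W t ω - ∫ s in (0:ℝ)..t, D (max s 0) ω :=
      ((continuous_const.add (continuous_const.mul continuous_id)).add
        (continuous_const.mul (hWcont ω))).sub hcont0
    refine hbig.continuousOn.congr ?_
    intro t ht
    simp only [surplus]
    rw [hintcongr t ht ω]
  have hτmeas : Measurable fun ω => depletionTime fun t => surplus μ σ x W D t ω :=
    meas_depletionTime hsurpmeas hsurpcont
  have hDinnerMeas : Measurable (innerJ (Ω := Ω) μ σ q Λ x W D) :=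
    innerJ_meas hjointmax hτmeas
  have hJDnonneg : 0 ≤ J μ σ q Λ x P W D := (J_bounds (P := P) (x := x) (W := W) hq hΛ hAsub' hDadm).1
  have hmq : 0 ≤ meshSize A / q := div_nonneg hmesh0 hq.le
  have hJJ : J μ σ q Λ x P W C ≤ J μ σ q Λ x P W D + meshSize A / q := by
    by_cases hInt : Integrable (innerJ μ σ q Λ x W C) P
    · have hintD : Integrable (innerJ μ σ q Λ x W D) P := by
        refine ⟨hDinnerMeas.aestronglyMeasurable, ?_⟩
        refine HasFiniteIntegral.of_bounded (C := (cbar + Λ) / q) ?_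
        filter_upwards with ω
        rw [Real.norm_eq_abs,
          abs_of_nonneg (innerJ_bounds hq hΛ hAsub' hDadm ω).1]
        exact (innerJ_bounds hq hΛ hAsub' hDadm ω).2
      rw [J_eq_integral_innerJ, J_eq_integral_innerJ]
      calc ∫ ω, innerJ μ σ q Λ x W C ω ∂P
          ≤ ∫ ω, (innerJ μ σ q Λ x W D ω + meshSize A / q) ∂P :=
            integral_mono hInt (hintD.add (integrable_const _)) hinner
        _ = ∫ ω, innerJ μ σ q Λ x W D ω ∂P + meshSize A / q := by
            rw [integral_add hintD (integrable_const _), integral_const]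
            simp
    · rw [J_eq_integral_innerJ, integral_undef hInt]
      linarith
  have hle : J μ σ q Λ x P W D ≤ V μ σ q Λ P F W (A : Set ℝ) x (ctilde A c) :=
    le_csSup (TT_bddAbove hq hΛ hAsub') ⟨D, hDadm, rfl⟩
  linarith

end Lower

/-- For a nested sequence of finite rate sets `Sⁿ ⊆ [0,c̄]` with
`S⁰ = {0,c̄}`, `Sⁿ ⊆ Sⁿ⁺¹` and mesh size tending to `0`, the discrete value functions
`Vⁿ(x,c) = V^{Sⁿ}(x,c̃ⁿ)` are non-decreasing in `n`, bounded by `V^{[0,c̄]}(x,c)`, converge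
pointwise to a limit `V̄`, and the convergence is uniform on `[0,∞) × [0,c̄]`. -/
theorem discrete_value_functions_converge_uniformly
    (μ σ q Λ cbar : ℝ) (hσ : 0 < σ) (hq : 0 < q) (hΛ : 0 < Λ) (hcbar : 0 < cbar)
    (P : Measure Ω) [IsProbabilityMeasure P] (F : Filtration ℝ mΩ) (W : ℝ → Ω → ℝ)
    (hBM : IsStdBM P F W) (hF : F = Filtration.natural W hBM.meas)
    (Sn : ℕ → Finset ℝ)
    (h0 : (Sn 0 : Set ℝ) = {0, cbar})
    (hnested : ∀ n : ℕ, Sn n ⊆ Sn (n + 1))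
    (hmem : ∀ n : ℕ, (0:ℝ) ∈ Sn n ∧ cbar ∈ Sn n)
    (hrange : ∀ n : ℕ, ∀ a ∈ Sn n, a ∈ Icc (0:ℝ) cbar)
    (hmesh : Tendsto (fun n => meshSize (Sn n)) atTop (𝓝 0)) :
    (∀ n : ℕ, ∀ x c : ℝ, 0 ≤ x → c ∈ Icc (0:ℝ) cbar →
      V μ σ q Λ P F W (Sn n : Set ℝ) x (ctilde (Sn n) c) ≤
        V μ σ q Λ P F W (Sn (n + 1) : Set ℝ) x (ctilde (Sn (n + 1)) c) ∧
      V μ σ q Λ P F W (Sn n : Set ℝ) x (ctilde (Sn n) c) ≤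
        V μ σ q Λ P F W (Icc 0 cbar) x c) ∧
    ∃ Vbar : ℝ → ℝ → ℝ,
      (∀ x c : ℝ, 0 ≤ x → c ∈ Icc (0:ℝ) cbar →
        Tendsto (fun n => V μ σ q Λ P F W (Sn n : Set ℝ) x (ctilde (Sn n) c)) atTop
          (𝓝 (Vbar x c))) ∧
      TendstoUniformlyOn
        (fun n (p : ℝ × ℝ) => V μ σ q Λ P F W (Sn n : Set ℝ) p.1 (ctilde (Sn n) p.2))
        (fun p : ℝ × ℝ => Vbar p.1 p.2) atTop (Ici 0 ×ˢ Icc 0 cbar) := by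
  have hWmeas := hBM.meas
  have hWcont := hBM.cont
  have hSn_sub : ∀ n, (Sn n : Set ℝ) ⊆ Icc 0 cbar := fun n a ha => hrange n a ha
  have h0n : ∀ n, (0:ℝ) ∈ Sn n := fun n => (hmem n).1
  have hpart1 : ∀ n : ℕ, ∀ x c : ℝ, 0 ≤ x → c ∈ Icc (0:ℝ) cbar →
      V μ σ q Λ P F W (Sn n : Set ℝ) x (ctilde (Sn n) c) ≤
        V μ σ q Λ P F W (Sn (n + 1) : Set ℝ) x (ctilde (Sn (n + 1)) c) ∧
      V μ σ q Λ P F W (Sn n : Set ℝ) x (ctilde (Sn n) c) ≤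
        V μ σ q Λ P F W (Icc 0 cbar) x c := by
    intro n x c hx hc
    constructor
    · exact V_mono hq hΛ (hSn_sub (n+1)) (Finset.coe_subset.2 (hnested n))
        (ctilde_mono_set (h0n n) hc.1 (hnested n)) (h0n n)
        (ctilde_nonneg (h0n n) hc.1)
    · exact V_mono hq hΛ subset_rfl (hSn_sub n) (ctilde_le (h0n n) hc.1) (h0n n)
        (ctilde_nonneg (h0n n) hc.1)
  have hkey : ∀ n : ℕ, ∀ x c : ℝ, 0 ≤ x → c ∈ Icc (0:ℝ) cbar →
      V μ σ q Λ P F W (Icc 0 cbar) x c - meshSize (Sn n) / q ≤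
        V μ σ q Λ P F W (Sn n : Set ℝ) x (ctilde (Sn n) c) ∧
      V μ σ q Λ P F W (Sn n : Set ℝ) x (ctilde (Sn n) c) ≤
        V μ σ q Λ P F W (Icc 0 cbar) x c := by
    intro n x c hx hc
    refine ⟨?_, (hpart1 n x c hx hc).2⟩
    have h := V_discrete_lower (μ := μ) (σ := σ) (F := F) (W := W) (P := P) (x := x)
      hq hΛ hcbar hWmeas hWcont (Sn n)
      (h0n n) (hmem n).2 (fun a ha => hrange n a ha) hc
    linarith
  have hmq : Tendsto (fun n => meshSize (Sn n) / q) atTop (𝓝 0) := by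
    simpa using hmesh.div_const q
  refine ⟨hpart1, fun x c => V μ σ q Λ P F W (Icc 0 cbar) x c, ?_, ?_⟩
  · intro x c hx hc
    refine tendsto_of_tendsto_of_tendsto_of_le_of_le
      (g := fun n => V μ σ q Λ P F W (Icc 0 cbar) x c - meshSize (Sn n) / q)
      (h := fun _ => V μ σ q Λ P F W (Icc 0 cbar) x c) ?_ tendsto_const_nhds
      (fun n => (hkey n x c hx hc).1) (fun n => (hkey n x c hx hc).2)
    have hconst : Tendsto (fun _ : ℕ => V μ σ q Λ P F W (Icc 0 cbar) x c) atTop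
        (𝓝 (V μ σ q Λ P F W (Icc 0 cbar) x c)) := tendsto_const_nhds
    simpa using hconst.sub hmq
  · rw [Metric.tendstoUniformlyOn_iff]
    intro ε hε
    have hev : ∀ᶠ n in atTop, meshSize (Sn n) / q < ε :=
      hmq.eventually (eventually_lt_nhds hε)
    filter_upwards [hev] with n hn p hp
    obtain ⟨hx, hc⟩ := hp
    have hk := hkey n p.1 p.2 hx hc
    rw [Real.dist_eq, abs_of_nonneg (by linarith [hk.1, hk.2])]
    linarith [hk.1, hk.2]

end CarbonAbatement
end
end
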